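/- arXiv:0903.1984 — 3 statements merged into one kernel-verified Lean document; each statement's English description precedes it below -/
import Mathlib

section
/- The function Q(x) = e^{ψ(x+1)} - x is convex on (0, ∞). -/
open Real MeasureTheory Filter Set

/-- The digamma function ψ = Γ'/Γ, the logarithmic derivative of the Gamma function. -/
noncomputable def digamma (x : ℝ) : ℝ := deriv (fun y => Real.log (Real.Gamma y)) x

/-- The k-th polygamma function ψ^(k), the k-th derivative of the digamma function. -/
noncomputable def polygamma (k : ℕ) (x : ℝ) : ℝ := iteratedDeriv k digamma x

section Stmt10AuxSection
open Topology
set_option maxHeartbeats 1000000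

namespace Stmt10Aux

noncomputable def psi (x : ℝ) : ℝ :=
  -Real.eulerMascheroniConstant + ∑' n : ℕ, (1 / ((n : ℝ) + 1) - 1 / (x + n))

noncomputable def T1 (x : ℝ) : ℝ := ∑' n : ℕ, 1 / (x + (n : ℝ)) ^ 2

noncomputable def T2 (x : ℝ) : ℝ := ∑' n : ℕ, (-2) / (x + (n : ℝ)) ^ 3

lemma cast_lb {c : ℝ} (hc : 0 < c) (n : ℕ) : min c 1 * ((n : ℝ) + 1) ≤ c + n := by
  have h1 : min c 1 ≤ c := min_le_left _ _
  have h2 : min c 1 ≤ 1 := min_le_right _ _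
  have h0 : (0:ℝ) ≤ (n : ℝ) := Nat.cast_nonneg n
  nlinarith

lemma summable_base : Summable (fun n : ℕ => 1 / ((n : ℝ) + 1) ^ 2) := by
  have h := (summable_nat_add_iff (f := fun n : ℕ => 1 / (n : ℝ) ^ 2) 1).2
    (Real.summable_one_div_nat_pow.mpr one_lt_two)
  refine h.congr fun n => ?_
  push_cast
  ring

lemma summable_one_div_pow {c : ℝ} (hc : 0 < c) {p : ℕ} (hp : 2 ≤ p) :
    Summable (fun n : ℕ => 1 / (c + (n : ℝ)) ^ p) := by
  set m := min c 1 with hm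
  have hm0 : 0 < m := lt_min hc one_pos
  refine Summable.of_nonneg_of_le (fun n => by positivity)
    (fun n => ?_) (summable_base.mul_left (1 / m ^ p))
  have hlb := cast_lb hc n
  have h1 : m ^ p * ((n:ℝ) + 1) ^ p ≤ (c + n) ^ p := by
    rw [← mul_pow]; exact pow_le_pow_left₀ (by positivity) hlb p
  have h2 : ((n:ℝ) + 1) ^ 2 ≤ ((n:ℝ) + 1) ^ p := pow_le_pow_right₀ (by norm_num) hp
  calc 1 / (c + (n:ℝ)) ^ p ≤ 1 / (m ^ p * ((n:ℝ) + 1) ^ 2) := by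
        refine one_div_le_one_div_of_le (by positivity) ?_
        calc m ^ p * ((n:ℝ)+1)^2 ≤ m ^ p * ((n:ℝ)+1)^p :=
              mul_le_mul_of_nonneg_left h2 (by positivity)
          _ ≤ (c + n) ^ p := h1
    _ = 1 / m ^ p * (1 / ((n:ℝ) + 1) ^ 2) := by rw [one_div_mul_one_div]

lemma tendsto_one_div_pow (x : ℝ) {p : ℕ} (hp : p ≠ 0) :
    Tendsto (fun n : ℕ => 1 / (x + (n : ℝ)) ^ p) atTop (𝓝 0) := by
  have hxn : Tendsto (fun n : ℕ => x + (n : ℝ)) atTop atTop :=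
    tendsto_atTop_add_const_left _ x tendsto_natCast_atTop_atTop
  have := ((tendsto_pow_atTop hp).comp hxn).inv_tendsto_atTop
  simpa [one_div, Function.comp_def, Pi.inv_def] using this

lemma hasSum_telescope {g : ℕ → ℝ} (hg : ∀ n, g (n + 1) ≤ g n)
    (hg0 : Tendsto g atTop (𝓝 0)) :
    HasSum (fun n => g n - g (n + 1)) (g 0) := by
  rw [hasSum_iff_tendsto_nat_of_nonneg (fun n => sub_nonneg.2 (hg n))]
  have : ∀ n : ℕ, ∑ i ∈ Finset.range n, (g i - g (i + 1)) = g 0 - g n :=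
    fun n => Finset.sum_range_sub' g n
  simp_rw [this]
  simpa using tendsto_const_nhds.sub hg0

lemma aux1 (a : ℝ) (ha : 0 < a) :
    1 / a + 1 / (2 * a ^ 2) - (1 / (a + 1) + 1 / (2 * (a + 1) ^ 2)) ≤ 1 / a ^ 2 := by
  have ha1 : (0:ℝ) < a + 1 := by linarith
  rw [div_add_div _ _ (by positivity) (by positivity),
    div_add_div _ _ (by positivity) (by positivity),
    div_sub_div _ _ (by positivity) (by positivity),
    div_le_div_iff₀ (by positivity) (by positivity)]
  nlinarith [pow_pos ha 2, pow_pos ha1 2, pow_pos ha 4, sq_nonneg a, mul_pos ha ha1]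

lemma aux3 (a : ℝ) (ha : 0 < a) :
    2 / (a + 1) ^ 3 ≤ 1 / a ^ 2 - 1 / (a + 1) ^ 2 := by
  have ha1 : (0:ℝ) < a + 1 := by linarith
  rw [div_sub_div _ _ (by positivity) (by positivity),
    div_le_div_iff₀ (by positivity) (by positivity)]
  nlinarith [pow_pos ha 2, pow_pos ha1 2, sq_nonneg a]

lemma pos_add_nat {x : ℝ} (hx : 0 < x) (n : ℕ) : 0 < x + (n : ℝ) := by positivity

lemma summable_T1 {y : ℝ} (hy : 0 < y) : Summable (fun n : ℕ => 1 / (y + (n : ℝ)) ^ 2) :=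
  summable_one_div_pow hy le_rfl

lemma summable_cube {y : ℝ} (hy : 0 < y) : Summable (fun n : ℕ => 2 / (y + (n : ℝ)) ^ 3) :=
  ((summable_one_div_pow hy (p := 3) (by norm_num)).mul_left 2).congr fun n => by
    rw [mul_one_div]

lemma summable_T2 {y : ℝ} (hy : 0 < y) : Summable (fun n : ℕ => (-2) / (y + (n : ℝ)) ^ 3) :=
  ((summable_one_div_pow hy (p := 3) (by norm_num)).mul_left (-2)).congr fun n => by
    rw [mul_one_div]

lemma T1_shift {y : ℝ} (hy : 0 < y) : T1 y = 1 / y ^ 2 + T1 (y + 1) := by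
  rw [T1, Summable.tsum_eq_zero_add (summable_T1 hy)]
  congr 1
  · norm_num
  · rw [T1]
    exact tsum_congr fun n => by push_cast; ring_nf

lemma T2_shift {y : ℝ} (hy : 0 < y) : T2 y = -2 / y ^ 3 + T2 (y + 1) := by
  rw [T2, Summable.tsum_eq_zero_add (summable_T2 hy)]
  congr 1
  · norm_num
  · rw [T2]
    exact tsum_congr fun n => by push_cast; ring_nf

lemma T1_lb {y : ℝ} (hy : 0 < y) : 1 / y + 1 / (2 * y ^ 2) ≤ T1 y := by
  set g : ℕ → ℝ := fun n => 1 / (y + n) + 1 / (2 * (y + n) ^ 2) with hgdef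
  have key : ∀ n : ℕ, g n - g (n + 1) ≤ 1 / (y + (n:ℝ)) ^ 2 := by
    intro n
    have h1 : (0:ℝ) < y + n := pos_add_nat hy n
    have e : ((n + 1 : ℕ) : ℝ) = (n : ℝ) + 1 := by push_cast; ring
    have e2 : y + ((n:ℝ) + 1) = (y + n) + 1 := by ring
    simp only [hgdef, e, e2]
    exact aux1 _ h1
  have hmono : ∀ n, g (n + 1) ≤ g n := by
    intro n
    have h1 : (0:ℝ) < y + n := pos_add_nat hy n
    have h2 := key n
    have h3 : (0:ℝ) < 1 / (y + (n:ℝ)) ^ 2 := by positivity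
    -- need monotonicity directly
    have e : ((n + 1 : ℕ) : ℝ) = (n : ℝ) + 1 := by push_cast; ring
    simp only [hgdef, e]
    have hA : 1 / (y + ((n:ℝ) + 1)) ≤ 1 / (y + n) :=
      one_div_le_one_div_of_le h1 (by linarith)
    have hB : 1 / (2 * (y + ((n:ℝ) + 1)) ^ 2) ≤ 1 / (2 * (y + n) ^ 2) :=
      one_div_le_one_div_of_le (by positivity) (by nlinarith)
    linarith
  have hg0 : Tendsto g atTop (𝓝 0) := by
    have h1 := tendsto_one_div_pow y (p := 1) one_ne_zero
    have h2 := (tendsto_one_div_pow y (p := 2) two_ne_zero).const_mul (1/2 : ℝ)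
    have h3 : Tendsto (fun n : ℕ => 1 / (y + (n:ℝ)) ^ 1 + 1/2 * (1 / (y + (n:ℝ)) ^ 2))
        atTop (𝓝 0) := by simpa using h1.add h2
    refine h3.congr fun n => ?_
    simp only [hgdef, pow_one]
    rw [one_div_mul_one_div]
  have htel := hasSum_telescope hmono hg0
  have hg00 : g 0 = 1 / y + 1 / (2 * y ^ 2) := by simp [hgdef]
  rw [← hg00]
  exact hasSum_le key htel (summable_T1 hy).hasSum

lemma cube_ub {y : ℝ} (hy : 0 < y) :
    ∑' n : ℕ, 2 / (y + (n : ℝ)) ^ 3 ≤ 2 / y ^ 3 + 1 / y ^ 2 := by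
  rw [Summable.tsum_eq_zero_add (summable_cube hy)]
  have e0 : 2 / (y + ((0:ℕ):ℝ)) ^ 3 = 2 / y ^ 3 := by norm_num
  rw [e0]
  gcongr
  set g : ℕ → ℝ := fun n => 1 / (y + n) ^ 2 with hgdef
  have hmono : ∀ n, g (n + 1) ≤ g n := by
    intro n
    have h1 : (0:ℝ) < y + n := pos_add_nat hy n
    have e : ((n + 1 : ℕ) : ℝ) = (n : ℝ) + 1 := by push_cast; ring
    simp only [hgdef, e]
    exact one_div_le_one_div_of_le (by positivity) (by nlinarith)
  have htel := hasSum_telescope hmono (tendsto_one_div_pow y two_ne_zero)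
  have hg00 : g 0 = 1 / y ^ 2 := by simp [hgdef]
  rw [← hg00]
  have hsummable : Summable (fun n : ℕ => 2 / (y + ((n + 1 : ℕ) : ℝ)) ^ 3) := by
    refine (summable_cube (show (0:ℝ) < y + 1 by linarith)).congr fun n => ?_
    push_cast; ring_nf
  refine hasSum_le (fun n => ?_) hsummable.hasSum htel
  have h1 : (0:ℝ) < y + n := pos_add_nat hy n
  have e : ((n + 1 : ℕ) : ℝ) = (n : ℝ) + 1 := by push_cast; ring
  have e2 : y + ((n:ℝ) + 1) = (y + n) + 1 := by ring
  simp only [hgdef, e, e2]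
  exact aux3 _ h1

lemma T2_lb {y : ℝ} (hy : 0 < y) : -(2 / y ^ 3 + 1 / y ^ 2) ≤ T2 y := by
  have h : T2 y = -∑' n : ℕ, 2 / (y + (n : ℝ)) ^ 3 := by
    rw [T2, ← tsum_neg]
    exact tsum_congr fun n => by ring
  rw [h, neg_le_neg_iff]
  exact cube_ub hy

lemma T1_nonneg {y : ℝ} (hy : 0 < y) : 0 ≤ T1 y :=
  tsum_nonneg fun n => by positivity

lemma u_step {y : ℝ} (hy : 0 < y) :
    (T1 (y + 1)) ^ 2 + T2 (y + 1) ≤ (T1 y) ^ 2 + T2 y := by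
  have hy1 : (0:ℝ) < y + 1 := by linarith
  have hlb := T1_lb hy1
  rw [T1_shift hy, T2_shift hy]
  rw [← sub_nonneg]
  have e : (1 / y ^ 2 + T1 (y + 1)) ^ 2 + (-2 / y ^ 3 + T2 (y + 1)) -
      ((T1 (y + 1)) ^ 2 + T2 (y + 1)) =
      2 * T1 (y + 1) / y ^ 2 + 1 / y ^ 4 - 2 / y ^ 3 := by ring
  rw [e]
  have h5 : 2 * (1 / (y+1) + 1 / (2 * (y+1) ^ 2)) / y ^ 2 ≤ 2 * T1 (y + 1) / y ^ 2 := by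
    gcongr
  have h6 : 0 ≤ 2 * (1 / (y+1) + 1 / (2 * (y+1) ^ 2)) / y ^ 2 + 1 / y ^ 4 - 2 / y ^ 3 := by
    have e2 : 2 * (1 / (y+1) + 1 / (2 * (y+1) ^ 2)) / y ^ 2 + 1 / y ^ 4 - 2 / y ^ 3
        = 1 / (y ^ 4 * (y + 1) ^ 2) := by
      field_simp
      ring
    rw [e2]
    positivity
  linarith

lemma u_iter {y : ℝ} (hy : 0 < y) (n : ℕ) :
    (T1 (y + n)) ^ 2 + T2 (y + n) ≤ (T1 y) ^ 2 + T2 y := by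
  induction n with
  | zero => simp
  | succ n ih =>
    refine le_trans ?_ ih
    have e : y + ((n + 1 : ℕ) : ℝ) = (y + n) + 1 := by push_cast; ring
    rw [e]
    exact u_step (by positivity)

lemma u_nonneg {y : ℝ} (hy : 0 < y) : 0 ≤ (T1 y) ^ 2 + T2 y := by
  have hlim : Tendsto (fun n : ℕ => -(2 * (1 / (y + (n:ℝ)) ^ 3) + 1 / (y + (n:ℝ)) ^ 2))
      atTop (𝓝 0) := by
    have h3 := (tendsto_one_div_pow y (p := 3) (by norm_num)).const_mul 2
    have h2 := tendsto_one_div_pow y (p := 2) two_ne_zero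
    simpa using (h3.add h2).neg
  refine le_of_tendsto' hlim fun n => ?_
  have hyn : (0:ℝ) < y + n := by positivity
  have h1 : -(2 / (y + (n:ℝ)) ^ 3 + 1 / (y + (n:ℝ)) ^ 2) ≤ T2 (y + n) := T2_lb hyn
  have h2 : T2 (y + n) ≤ (T1 (y + n)) ^ 2 + T2 (y + n) := by nlinarith [sq_nonneg (T1 (y+n))]
  have h3 := u_iter hy n
  have e : 2 * (1 / (y + (n:ℝ)) ^ 3) = 2 / (y + (n:ℝ)) ^ 3 := by rw [mul_one_div]
  rw [e]
  linarith

lemma mem_s {x : ℝ} (hx : 0 < x) : x ∈ Ioo (min (x/2) (1/2)) (x + 2) :=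
  ⟨lt_of_le_of_lt (min_le_left _ _) (by linarith), by linarith⟩

lemma one_mem_s {x : ℝ} (hx : 0 < x) : (1:ℝ) ∈ Ioo (min (x/2) (1/2)) (x + 2) :=
  ⟨lt_of_le_of_lt (min_le_right _ _) (by norm_num), by linarith⟩

lemma c_pos {x : ℝ} (hx : 0 < x) : 0 < min (x/2) (1/2) := lt_min (by linarith) (by norm_num)

lemma hasDerivAt_psi_term (n : ℕ) {y : ℝ} (hy : 0 < y + (n:ℝ)) :
    HasDerivAt (fun z : ℝ => 1 / ((n : ℝ) + 1) - 1 / (z + n)) (1 / (y + (n:ℝ)) ^ 2) y := by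
  have h1 : HasDerivAt (fun z : ℝ => z + (n:ℝ)) 1 y := (hasDerivAt_id y).add_const _
  have h2 : HasDerivAt (fun z : ℝ => (z + (n:ℝ))⁻¹) (-((y + (n:ℝ)) ^ 2)⁻¹ * 1) y :=
    (hasDerivAt_inv hy.ne').comp y h1
  have h3 := h2.const_sub (1 / ((n : ℝ) + 1))
  simpa [one_div] using h3

lemma hasDerivAt_T1_term (n : ℕ) {y : ℝ} (hy : 0 < y + (n:ℝ)) :
    HasDerivAt (fun z : ℝ => 1 / (z + (n:ℝ)) ^ 2) ((-2) / (y + (n:ℝ)) ^ 3) y := by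
  have h1 : HasDerivAt (fun z : ℝ => (z + (n:ℝ)) ^ 2) (2 * (y + (n:ℝ))) y := by
    have := ((hasDerivAt_id y).add_const (n:ℝ)).pow 2
    simpa [Pi.pow_def] using this
  have h2 := h1.inv (by positivity)
  have e : (-2:ℝ) / (y + (n:ℝ)) ^ 3 = -(2 * (y + (n:ℝ))) / ((y + (n:ℝ)) ^ 2) ^ 2 := by
    field_simp
  rw [e]
  simpa [one_div, Pi.inv_def] using h2

lemma hasDerivAt_psi {x : ℝ} (hx : 0 < x) : HasDerivAt psi (T1 x) x := by
  set c := min (x/2) (1/2) with hc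
  have hc0 : 0 < c := c_pos hx
  have key : HasDerivAt (fun y : ℝ => ∑' n : ℕ, (1 / ((n : ℝ) + 1) - 1 / (y + n)))
      (∑' n : ℕ, 1 / (x + (n:ℝ)) ^ 2) x := by
    refine hasDerivAt_tsum_of_isPreconnected (u := fun n : ℕ => 1 / (c + (n:ℝ)) ^ 2)
      (g := fun (n : ℕ) (y : ℝ) => 1 / ((n : ℝ) + 1) - 1 / (y + n))
      (g' := fun (n : ℕ) (y : ℝ) => 1 / (y + (n:ℝ)) ^ 2)
      (summable_one_div_pow hc0 le_rfl) isOpen_Ioo (convex_Ioo _ _).isPreconnected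
      (fun n y hy => hasDerivAt_psi_term n
        (add_pos_of_pos_of_nonneg (hc0.trans hy.1) (Nat.cast_nonneg n)))
      (fun n y hy => ?_) (one_mem_s hx) ?_ (mem_s hx)
    · have hyn : (0:ℝ) < y + n :=
        add_pos_of_pos_of_nonneg (hc0.trans hy.1) (Nat.cast_nonneg n)
      show |1 / (y + (n:ℝ)) ^ 2| ≤ 1 / (c + (n:ℝ)) ^ 2
      have hcn : (0:ℝ) < c + n := by positivity
      rw [abs_of_nonneg (by positivity)]
      apply one_div_le_one_div_of_le (by positivity)
      exact pow_le_pow_left₀ hcn.le (by linarith [hy.1]) 2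
    · have e : (fun n : ℕ => 1 / ((n:ℝ) + 1) - 1 / ((1:ℝ) + (n:ℝ))) = fun _ => (0:ℝ) :=
        funext fun n => by rw [add_comm (1:ℝ) (n:ℝ)]; ring
      show Summable fun n : ℕ => 1 / ((n:ℝ) + 1) - 1 / ((1:ℝ) + (n:ℝ))
      rw [e]
      exact summable_zero
  exact key.const_add _

lemma hasDerivAt_T1 {x : ℝ} (hx : 0 < x) : HasDerivAt T1 (T2 x) x := by
  set c := min (x/2) (1/2) with hc
  have hc0 : 0 < c := c_pos hx
  refine hasDerivAt_tsum_of_isPreconnected (u := fun n : ℕ => 2 / (c + (n:ℝ)) ^ 3)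
    (g := fun (n : ℕ) (y : ℝ) => 1 / (y + (n:ℝ)) ^ 2)
    (g' := fun (n : ℕ) (y : ℝ) => (-2) / (y + (n:ℝ)) ^ 3)
    (((summable_one_div_pow hc0 (p := 3) (by norm_num)).mul_left 2).congr
      (fun n => by rw [mul_one_div]))
    isOpen_Ioo (convex_Ioo _ _).isPreconnected
    (fun n y hy => hasDerivAt_T1_term n
      (add_pos_of_pos_of_nonneg (hc0.trans hy.1) (Nat.cast_nonneg n)))
    (fun n y hy => ?_) (mem_s hx) (summable_one_div_pow hx le_rfl) (mem_s hx)
  have hyn : (0:ℝ) < y + n :=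
    add_pos_of_pos_of_nonneg (hc0.trans hy.1) (Nat.cast_nonneg n)
  have hcn : (0:ℝ) < c + n := by positivity
  show |(-2) / (y + (n:ℝ)) ^ 3| ≤ 2 / (c + (n:ℝ)) ^ 3
  rw [neg_div, abs_neg, abs_of_nonneg (by positivity)]
  have hcy : c + (n:ℝ) ≤ y + n := by linarith [hy.1]
  gcongr

lemma harmonic_cast (N : ℕ) :
    ((harmonic N : ℚ) : ℝ) = ∑ m ∈ Finset.range N, 1 / ((m : ℝ) + 1) := by
  rw [harmonic]
  push_cast
  exact Finset.sum_congr rfl fun m _ => by rw [one_div]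

lemma tendsto_log_ratio :
    Tendsto (fun N : ℕ => Real.log ((N : ℝ) + 1) - Real.log N) atTop (𝓝 0) := by
  have hlog : Tendsto (fun y : ℝ => Real.log (y + 1) - Real.log y) atTop (𝓝 0) := by
    have h0 : Tendsto (fun y : ℝ => Real.log (1 + 1 / y)) atTop (𝓝 0) := by
      simpa only [add_zero, Real.log_one, id_eq] using
        (((tendsto_const_nhds (x := (1:ℝ))).div_atTop tendsto_id).const_add 1).log (by norm_num)
    apply h0.congr'
    filter_upwards [eventually_gt_atTop 0] with y hy
    rw [← Real.log_div (by positivity) hy.ne']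
    congr 1
    field_simp
  exact hlog.comp tendsto_natCast_atTop_atTop

lemma tendsto_const_part :
    Tendsto (fun N : ℕ => Real.log N - ((harmonic (N + 1) : ℚ) : ℝ)) atTop
      (𝓝 (-Real.eulerMascheroniConstant)) := by
  have hA : Tendsto (fun N : ℕ => ((harmonic (N + 1) : ℚ) : ℝ) - Real.log ((N : ℝ) + 1))
      atTop (𝓝 Real.eulerMascheroniConstant) := by
    have := Real.tendsto_harmonic_sub_log.comp (tendsto_add_atTop_nat 1)
    refine this.congr fun N => ?_
    simp only [Function.comp_apply]
    norm_num
  have h2 := tendsto_log_ratio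
  have := (hA.add h2).neg
  rw [add_zero] at this
  refine this.congr fun N => by ring

/-- The `N`-th approximation to the digamma function. -/
noncomputable def psiSeq (N : ℕ) (y : ℝ) : ℝ :=
  (Real.log N - ((harmonic (N + 1) : ℚ) : ℝ)) +
    ∑ m ∈ Finset.range (N + 1), (1 / ((m : ℝ) + 1) - 1 / (y + m))

lemma psiSeq_eq (N : ℕ) (y : ℝ) :
    psiSeq N y = Real.log N - ∑ m ∈ Finset.range (N + 1), 1 / (y + (m : ℝ)) := by
  rw [psiSeq, Finset.sum_sub_distrib, ← harmonic_cast]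
  ring

lemma hasDerivAt_logGammaSeq (N : ℕ) {y : ℝ} (hy : 0 < y) :
    HasDerivAt (fun z => Real.BohrMollerup.logGammaSeq z N) (psiSeq N y) y := by
  rw [psiSeq_eq]
  have h1 : HasDerivAt (fun z : ℝ => z * Real.log N) (Real.log N) y := hasDerivAt_mul_const _
  have h2 : HasDerivAt (fun z : ℝ => ∑ m ∈ Finset.range (N + 1), Real.log (z + m))
      (∑ m ∈ Finset.range (N + 1), 1 / (y + (m : ℝ))) y := by
    refine HasDerivAt.fun_sum fun m _ => ?_
    have hm : 0 < y + (m : ℝ) := add_pos_of_pos_of_nonneg hy (Nat.cast_nonneg m)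
    have := (Real.hasDerivAt_log hm.ne').comp y ((hasDerivAt_id y).add_const (m : ℝ))
    simpa [one_div, Function.comp_def] using this
  have := (h1.add_const (Real.log (Nat.factorial N))).sub h2
  exact this

lemma tendstoUniformlyOn_psiSeq {c R : ℝ} (hc : 0 < c) (hc1 : c ≤ 1) :
    TendstoUniformlyOn psiSeq psi atTop (Ioo c R) := by
  -- series part
  have hu : Summable (fun m : ℕ => (R + 1) / c * (1 / ((m : ℝ) + 1) ^ 2)) :=
    summable_base.mul_left _
  have hbound : ∀ (m : ℕ) (y : ℝ), y ∈ Ioo c R →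
      ‖1 / ((m : ℝ) + 1) - 1 / (y + m)‖ ≤ (R + 1) / c * (1 / ((m : ℝ) + 1) ^ 2) := by
    intro m y hy
    have hy0 : 0 < y := hc.trans hy.1
    have hym : 0 < y + (m : ℝ) := add_pos_of_pos_of_nonneg hy0 (Nat.cast_nonneg m)
    have hm1 : (0:ℝ) < (m : ℝ) + 1 := by positivity
    have hR : 0 < R := hy0.trans hy.2
    have e : 1 / ((m : ℝ) + 1) - 1 / (y + m) = (y - 1) / (((m : ℝ) + 1) * (y + m)) := by
      field_simp
      ring
    rw [Real.norm_eq_abs, e, abs_div,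
      abs_of_pos (show (0:ℝ) < ((m:ℝ) + 1) * (y + m) from by positivity)]
    have h1 : |y - 1| ≤ R + 1 := abs_le.2 ⟨by linarith [hy.1], by linarith [hy.2]⟩
    have h2 : c * ((m : ℝ) + 1) ^ 2 ≤ ((m : ℝ) + 1) * (y + m) := by
      have : c * ((m:ℝ) + 1) ≤ y + m := by nlinarith [Nat.cast_nonneg (α := ℝ) m, hy.1]
      nlinarith
    calc |y - 1| / (((m : ℝ) + 1) * (y + m)) ≤ (R + 1) / (c * ((m : ℝ) + 1) ^ 2) :=
          div_le_div₀ (by positivity) h1 (by positivity) h2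
      _ = (R + 1) / c * (1 / ((m : ℝ) + 1) ^ 2) := by
          field_simp
  have hseries0 := tendstoUniformlyOn_tsum_nat hu hbound
  have hseries : TendstoUniformlyOn
      (fun N y => ∑ m ∈ Finset.range (N + 1), (1 / ((m : ℝ) + 1) - 1 / (y + m)))
      (fun y => ∑' m : ℕ, (1 / ((m : ℝ) + 1) - 1 / (y + m))) atTop (Ioo c R) :=
    fun u hu' => (tendsto_add_atTop_nat 1).eventually (hseries0 u hu')
  have hconst := tendsto_const_part
  rw [Metric.tendstoUniformlyOn_iff] at hseries ⊢
  intro ε hε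
  have hε2 : 0 < ε / 2 := by linarith
  filter_upwards [hseries (ε / 2) hε2, Metric.tendsto_nhds.mp hconst (ε / 2) hε2]
    with N h1 h2 y hy
  have hpsi : psi y = -Real.eulerMascheroniConstant
      + ∑' m : ℕ, (1 / ((m : ℝ) + 1) - 1 / (y + m)) := rfl
  rw [hpsi, psiSeq]
  calc dist (-Real.eulerMascheroniConstant + ∑' m : ℕ, (1 / ((m : ℝ) + 1) - 1 / (y + m)))
        ((Real.log N - ((harmonic (N + 1) : ℚ) : ℝ)) +
          ∑ m ∈ Finset.range (N + 1), (1 / ((m : ℝ) + 1) - 1 / (y + m)))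
      ≤ dist (-Real.eulerMascheroniConstant) (Real.log N - ((harmonic (N + 1) : ℚ) : ℝ))
        + dist (∑' m : ℕ, (1 / ((m : ℝ) + 1) - 1 / (y + m)))
            (∑ m ∈ Finset.range (N + 1), (1 / ((m : ℝ) + 1) - 1 / (y + m))) :=
        dist_add_add_le _ _ _ _
    _ < ε / 2 + ε / 2 := by
        refine add_lt_add ?_ (h1 y hy)
        rw [dist_comm]
        exact h2
    _ = ε := by ring

lemma hasDerivAt_log_Gamma {x : ℝ} (hx : 0 < x) :
    HasDerivAt (fun y => Real.log (Real.Gamma y)) (psi x) x := by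
  have hc0 := c_pos hx
  refine hasDerivAt_of_tendstoUniformlyOn isOpen_Ioo
    (tendstoUniformlyOn_psiSeq hc0 ((min_le_right _ _).trans (by norm_num)))
    (Eventually.of_forall fun N y hy => hasDerivAt_logGammaSeq N (hc0.trans hy.1))
    (fun y hy => Real.BohrMollerup.tendsto_log_gamma (hc0.trans hy.1))
    (mem_s hx)

lemma digamma_eq {x : ℝ} (hx : 0 < x) : digamma x = psi x :=
  (hasDerivAt_log_Gamma hx).deriv

/-- The convexity witness function. -/
noncomputable def Q (x : ℝ) : ℝ := Real.exp (psi (x + 1)) - x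

noncomputable def Q' (x : ℝ) : ℝ := Real.exp (psi (x + 1)) * T1 (x + 1) - 1

lemma hasDerivAt_Q {x : ℝ} (hx : 0 < x) : HasDerivAt Q (Q' x) x := by
  have hx1 : (0:ℝ) < x + 1 := by linarith
  have h1 : HasDerivAt (fun z : ℝ => psi (z + 1)) (T1 (x + 1)) x := by
    have := (hasDerivAt_psi hx1).comp x ((hasDerivAt_id x).add_const 1)
    simpa [Function.comp_def] using this
  have h2 := h1.exp
  have h3 := h2.sub (hasDerivAt_id x)
  show HasDerivAt (fun i => Real.exp (psi (i + 1)) - i) (Q' x) x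
  simpa [Q, Q', Pi.sub_def, id_eq] using h3

lemma hasDerivAt_Q' {x : ℝ} (hx : 0 < x) :
    HasDerivAt Q' (Real.exp (psi (x + 1)) * ((T1 (x + 1)) ^ 2 + T2 (x + 1))) x := by
  have hx1 : (0:ℝ) < x + 1 := by linarith
  have h1 : HasDerivAt (fun z : ℝ => psi (z + 1)) (T1 (x + 1)) x := by
    have := (hasDerivAt_psi hx1).comp x ((hasDerivAt_id x).add_const 1)
    simpa [Function.comp_def] using this
  have h2 : HasDerivAt (fun z : ℝ => T1 (z + 1)) (T2 (x + 1)) x := by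
    have := (hasDerivAt_T1 hx1).comp x ((hasDerivAt_id x).add_const 1)
    simpa [Function.comp_def] using this
  have h3 := (h1.exp.mul h2).sub_const 1
  have e : Real.exp (psi (x + 1)) * T1 (x + 1) * T1 (x + 1) +
      Real.exp (psi (x + 1)) * T2 (x + 1) =
      Real.exp (psi (x + 1)) * ((T1 (x + 1)) ^ 2 + T2 (x + 1)) := by ring
  rw [← e]
  exact h3

lemma convexQ : ConvexOn ℝ (Ioi 0) Q := by
  have hint : interior (Ioi (0:ℝ)) = Ioi 0 := interior_Ioi
  have hdiff : DifferentiableOn ℝ Q (Ioi 0) :=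
    fun x hx => (hasDerivAt_Q hx).differentiableAt.differentiableWithinAt
  have hderiv_eq : ∀ x ∈ Ioi (0:ℝ), deriv Q x = Q' x :=
    fun x hx => (hasDerivAt_Q hx).deriv
  have heq : ∀ x ∈ Ioi (0:ℝ), deriv Q =ᶠ[𝓝 x] Q' := by
    intro x hx
    filter_upwards [isOpen_Ioi.mem_nhds hx] with z hz
    exact hderiv_eq z hz
  refine convexOn_of_deriv2_nonneg (convex_Ioi 0) hdiff.continuousOn ?_ ?_ ?_
  · rwa [hint]
  · rw [hint]
    intro x hx
    have : DifferentiableAt ℝ (deriv Q) x :=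
      (Filter.EventuallyEq.differentiableAt_iff (heq x hx)).mpr
        (hasDerivAt_Q' hx).differentiableAt
    exact this.differentiableWithinAt
  · rw [hint]
    intro x hx
    have h1 : deriv^[2] Q x = deriv (deriv Q) x := rfl
    rw [h1, Filter.EventuallyEq.deriv_eq (heq x hx), (hasDerivAt_Q' hx).deriv]
    have hx1 : (0:ℝ) < x + 1 := by have := mem_Ioi.mp hx; linarith
    exact mul_nonneg (Real.exp_nonneg _) (u_nonneg hx1)

end Stmt10Aux
end Stmt10AuxSection

theorem stmt10 :
    ConvexOn ℝ (Set.Ioi 0) (fun x : ℝ => Real.exp (digamma (x + 1)) - x) := by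
  obtain ⟨hset, hineq⟩ := Stmt10Aux.convexQ
  refine ⟨convex_Ioi 0, fun x hx y hy a b ha hb hab => ?_⟩
  have e : ∀ z ∈ Set.Ioi (0:ℝ), Real.exp (digamma (z + 1)) - z = Stmt10Aux.Q z := by
    intro z hz
    have hz1 : (0:ℝ) < z + 1 := by have := Set.mem_Ioi.mp hz; linarith
    rw [Stmt10Aux.Q, Stmt10Aux.digamma_eq hz1]
  have hmem : a • x + b • y ∈ Set.Ioi (0:ℝ) := (convex_Ioi 0) hx hy ha hb hab
  simp only
  rw [e x hx, e y hy, e _ hmem]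
  exact hineq hx hy ha hb hab
end

section
/- For all x > 0, ln(x + 1/2) - 1/x < ψ(x) < ln(x + 1) - 1/x, where ψ is the digamma function. -/
open Real MeasureTheory Filter Set

lemma digamma_hasDerivAt {x : ℝ} (hx : 0 < x) :
    HasDerivAt (fun y => Real.log (Real.Gamma y)) (digamma x) x := by
  have hd : DifferentiableAt ℝ Real.Gamma x :=
    Real.differentiableAt_Gamma (fun m => ne_of_gt (by
      have : (0:ℝ) ≤ m := Nat.cast_nonneg m; linarith))
  have hne : Real.Gamma x ≠ 0 := (Real.Gamma_pos_of_pos hx).ne'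
  exact (hd.log hne).hasDerivAt

lemma digamma_add_one {x : ℝ} (hx : 0 < x) : digamma (x + 1) = digamma x + 1 / x := by
  have h1 : HasDerivAt (fun y => Real.log (Real.Gamma (y + 1))) (digamma (x + 1)) x := by
    simpa [Function.comp_def] using (digamma_hasDerivAt (by linarith : (0:ℝ) < x + 1)).comp x
      ((hasDerivAt_id x).add_const 1)
  have h2 : HasDerivAt (fun y => Real.log (Real.Gamma y) + Real.log y)
      (digamma x + 1 / x) x := by
    simpa [one_div, Pi.add_def] using (digamma_hasDerivAt hx).add (Real.hasDerivAt_log hx.ne')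
  have heq : (fun y => Real.log (Real.Gamma y) + Real.log y)
      =ᶠ[nhds x] (fun y => Real.log (Real.Gamma (y + 1))) := by
    filter_upwards [eventually_gt_nhds hx] with y hy
    rw [Real.Gamma_add_one hy.ne', Real.log_mul hy.ne' (Real.Gamma_pos_of_pos hy).ne', add_comm]
  exact (h1.unique (h2.congr_of_eventuallyEq heq.symm)).symm ▸ rfl

lemma logGamma_succ_sub {y : ℝ} (hy : 0 < y) :
    Real.log (Real.Gamma (y + 1)) - Real.log (Real.Gamma y) = Real.log y := by
  rw [Real.Gamma_add_one hy.ne', Real.log_mul hy.ne' (Real.Gamma_pos_of_pos hy).ne']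
  ring

lemma log_le_digamma {y : ℝ} (hy : 0 < y) : Real.log y ≤ digamma (y + 1) := by
  have h := Real.convexOn_log_Gamma.slope_le_of_hasDerivAt (mem_Ioi.2 hy)
    (mem_Ioi.2 (by linarith : (0:ℝ) < y + 1)) (lt_add_one y)
    (digamma_hasDerivAt (by linarith : (0:ℝ) < y + 1))
  rwa [slope_def_field, Function.comp, Function.comp, add_sub_cancel_left, div_one,
    logGamma_succ_sub hy] at h

lemma digamma_le_log {y : ℝ} (hy : 0 < y) : digamma (y + 1) ≤ Real.log (y + 1) := by
  have h := Real.convexOn_log_Gamma.le_slope_of_hasDerivAt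
    (mem_Ioi.2 (by linarith : (0:ℝ) < y + 1)) (mem_Ioi.2 (by linarith : (0:ℝ) < y + 2))
    (by linarith) (digamma_hasDerivAt (by linarith : (0:ℝ) < y + 1))
  have e2 : y + 2 = (y + 1) + 1 := by ring
  rwa [slope_def_field, Function.comp, Function.comp,
    show y + 2 - (y + 1) = 1 by ring, div_one, e2,
    logGamma_succ_sub (by linarith : (0:ℝ) < y + 1)] at h

lemma log_symm_gt {u : ℝ} (hu0 : 0 < u) (hu1 : u < 1) :
    2 * u < Real.log (1 + u) - Real.log (1 - u) := by
  set f : ℝ → ℝ := fun t => Real.log (1 + t) - Real.log (1 - t) - 2 * t with hf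
  have key : StrictMonoOn f (Ico 0 1) := by
    apply strictMonoOn_of_deriv_pos (convex_Ico 0 1)
    · intro t ht
      rcases ht with ⟨h1, h2⟩
      have ha : (0:ℝ) < 1 + t := by linarith
      have hb : (0:ℝ) < 1 - t := by linarith
      apply ContinuousAt.continuousWithinAt
      have c1 : ContinuousAt (fun t : ℝ => Real.log (1 + t)) t :=
        (Real.continuousAt_log ha.ne').comp (by fun_prop)
      have c2 : ContinuousAt (fun t : ℝ => Real.log (1 - t)) t :=
        (Real.continuousAt_log hb.ne').comp (by fun_prop)
      exact (c1.sub c2).sub (by fun_prop)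
    · intro t ht
      rw [interior_Ico] at ht
      rcases ht with ⟨h1, h2⟩
      have ha : (0:ℝ) < 1 + t := by linarith
      have hb : (0:ℝ) < 1 - t := by linarith
      have d1 : HasDerivAt (fun t : ℝ => Real.log (1 + t)) (1 / (1 + t)) t := by
        simpa [one_div, Function.comp_def] using (Real.hasDerivAt_log ha.ne').comp t
          ((hasDerivAt_id t).const_add 1)
      have d2 : HasDerivAt (fun t : ℝ => Real.log (1 - t)) ((1 - t)⁻¹ * (0 - 1)) t :=
        (Real.hasDerivAt_log hb.ne').comp t ((hasDerivAt_const t (1:ℝ)).sub (hasDerivAt_id t))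
      have d3 : HasDerivAt (fun t : ℝ => 2 * t) 2 t := by
        simpa using (hasDerivAt_id t).const_mul 2
      have hd : HasDerivAt f (1 / (1 + t) - (1 - t)⁻¹ * (0 - 1) - 2) t := (d1.sub d2).sub d3
      rw [hd.deriv]
      have e : 1 / (1 + t) - (1 - t)⁻¹ * (0 - 1) - 2 = 2 * t ^ 2 / ((1 + t) * (1 - t)) := by
        field_simp
        ring
      rw [e]
      positivity
  have h0 : f 0 = 0 := by simp [hf]
  have := key (by constructor <;> norm_num) ⟨hu0.le, hu1⟩ hu0
  rw [h0] at this
  simp only [hf] at this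
  linarith

lemma key_ineq {a : ℝ} (ha : 1 / 2 < a) :
    1 / a < Real.log (a + 1 / 2) - Real.log (a - 1 / 2) := by
  have ha0 : 0 < a := by linarith
  have hu0 : 0 < 1 / (2 * a) := by positivity
  have hu1 : 1 / (2 * a) < 1 := by
    rw [div_lt_one (by linarith)]; linarith
  have h := log_symm_gt hu0 hu1
  have e1 : a + 1 / 2 = a * (1 + 1 / (2 * a)) := by field_simp
  have e2 : a - 1 / 2 = a * (1 - 1 / (2 * a)) := by field_simp
  rw [e1, e2, Real.log_mul ha0.ne' (by positivity),
    Real.log_mul ha0.ne' (by intro hh; rw [sub_eq_zero] at hh; rw [← hh] at hu1; norm_num at hu1)]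
  have : 2 * (1 / (2 * a)) = 1 / a := by field_simp
  linarith [h, this ▸ h]

lemma digamma_add_nat {x : ℝ} (hx : 0 < x) (n : ℕ) :
    digamma (x + 1 + n) = digamma (x + 1) + ∑ k ∈ Finset.range n, 1 / (x + 1 + k) := by
  induction n with
  | zero => simp
  | succ n ih =>
    have h : (0:ℝ) < x + 1 + n := by positivity
    push_cast
    rw [show x + 1 + (n + 1) = (x + 1 + n) + 1 by ring, digamma_add_one h, ih,
      Finset.sum_range_succ]
    ring

lemma sum_bound {x : ℝ} (hx : 0 < x) : ∀ n : ℕ, 1 ≤ n →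
    ∑ k ∈ Finset.range n, 1 / (x + 1 + k)
      ≤ Real.log (x + n + 1 / 2) - Real.log (x + 1 / 2)
        - (Real.log (x + 3 / 2) - Real.log (x + 1 / 2) - 1 / (x + 1)) := by
  intro n hn
  induction n with
  | zero => omega
  | succ n ih =>
    rcases Nat.eq_or_lt_of_le hn with h1 | h1
    · simp only [← h1]
      norm_num
      have : Real.log (x + 1 + 1 / 2) = Real.log (x + 3 / 2) := by
        rw [show x + 1 + (1:ℝ) / 2 = x + 3 / 2 by ring]
      linarith
    · have hn' : 1 ≤ n := by omega
      have hb := ih hn'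
      rw [Finset.sum_range_succ]
      have hk : 1 / (x + 1 + n) ≤ Real.log (x + 1 + n + 1 / 2) - Real.log (x + 1 + n - 1 / 2) :=
        (key_ineq (by have : (0:ℝ) ≤ n := Nat.cast_nonneg n; linarith : 1 / 2 < x + 1 + (n:ℝ))).le
      push_cast
      have e1 : x + 1 + (n:ℝ) + 1 / 2 = x + (n + 1) + 1 / 2 := by ring
      have e2 : x + 1 + (n:ℝ) - 1 / 2 = x + n + 1 / 2 := by ring
      rw [e1, e2] at hk
      linarith

lemma digamma_lower {x : ℝ} (hx : 0 < x) :
    Real.log (x + 1 / 2) + (Real.log (x + 3 / 2) - Real.log (x + 1 / 2) - 1 / (x + 1))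
      ≤ digamma (x + 1) := by
  set ε := Real.log (x + 3 / 2) - Real.log (x + 1 / 2) - 1 / (x + 1) with hε
  have hmain : ∀ n : ℕ, 1 ≤ n →
      Real.log (x + 1 / 2) + ε + (Real.log (x + n) - Real.log (x + n + 1 / 2))
        ≤ digamma (x + 1) := by
    intro n hn
    have hxn : (0:ℝ) < x + n := by positivity
    have h1 : digamma (x + 1 + n) = digamma (x + 1) + ∑ k ∈ Finset.range n, 1 / (x + 1 + k) :=
      digamma_add_nat hx n
    have h2 : Real.log (x + n) ≤ digamma (x + 1 + n) := by
      have := log_le_digamma hxn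
      rwa [show (x + (n:ℝ)) + 1 = x + 1 + n by ring] at this
    have h3 := sum_bound hx n hn
    linarith
  have h0 : Tendsto (fun n : ℕ => Real.log (x + n) - Real.log (x + n + 1 / 2))
      atTop (nhds 0) := by
    have ht : Tendsto (fun n : ℕ => x + (n:ℝ) + 1 / 2) atTop atTop := by
      apply tendsto_atTop_add_const_right
      exact tendsto_atTop_add_const_left _ x tendsto_natCast_atTop_atTop
    have hinv : Tendsto (fun n : ℕ => (x + (n:ℝ) + 1 / 2)⁻¹) atTop (nhds 0) :=
      ht.inv_tendsto_atTop
    have hmul := hinv.const_mul (1 / 2 : ℝ)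
    have h1 : Tendsto (fun n : ℕ => 1 - (1 / 2) * (x + (n:ℝ) + 1 / 2)⁻¹) atTop
        (nhds (1 - (1 / 2) * 0)) := tendsto_const_nhds.sub hmul
    norm_num at h1
    have hr : Tendsto (fun n : ℕ => (x + n) / (x + n + 1 / 2)) atTop (nhds 1) := by
      apply h1.congr
      intro n
      have hpos : (0:ℝ) < x + n + 1 / 2 := by positivity
      field_simp
      ring
    have hcomp := (Real.continuousAt_log one_ne_zero).tendsto.comp hr
    rw [Real.log_one] at hcomp
    apply hcomp.congr
    intro n
    have hp1 : (0:ℝ) < x + n := by positivity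
    have hp2 : (0:ℝ) < x + n + 1 / 2 := by positivity
    rw [Function.comp, Real.log_div hp1.ne' hp2.ne']
  have hlim : Tendsto (fun n : ℕ =>
      Real.log (x + 1 / 2) + ε + (Real.log (x + n) - Real.log (x + n + 1 / 2)))
      atTop (nhds (Real.log (x + 1 / 2) + ε)) := by
    simpa using h0.const_add (Real.log (x + 1 / 2) + ε)
  exact le_of_tendsto hlim (eventually_atTop.2 ⟨1, hmain⟩)

theorem stmt12 (x : ℝ) (hx : 0 < x) :
    Real.log (x + 1 / 2) - 1 / x < digamma x ∧
      digamma x < Real.log (x + 1) - 1 / x := by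
  have hrec := digamma_add_one hx
  constructor
  · have hkey : 1 / (x + 1) < Real.log (x + 3 / 2) - Real.log (x + 1 / 2) := by
      have h := key_ineq (a := x + 1) (by linarith)
      rwa [show x + 1 + 1 / 2 = x + 3 / 2 by ring, show x + 1 - 1 / 2 = x + 1 / 2 by ring] at h
    have hl := digamma_lower hx
    linarith
  · have hup : digamma (x + 1) ≤ Real.log (x + 1) := digamma_le_log hx
    by_contra hcon
    push_neg at hcon
    have h1 : Real.log (x + 1) ≤ digamma (x + 1) := by rw [hrec]; linarith
    have hrec2 := digamma_add_one (show (0:ℝ) < x + 1 by linarith)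
    have hup2 : digamma (x + 1 + 1) ≤ Real.log (x + 1 + 1) :=
      digamma_le_log (show (0:ℝ) < x + 1 by linarith)
    have hlog : Real.log (x + 1 + 1) - Real.log (x + 1) < 1 / (x + 1) := by
      have hne : (x + 1 + 1) / (x + 1) ≠ 1 := by
        intro h
        rw [div_eq_one_iff_eq (by positivity : (0:ℝ) < x + 1).ne'] at h
        linarith
      have h3 : Real.log ((x + 1 + 1) / (x + 1)) < (x + 1 + 1) / (x + 1) - 1 :=
        Real.log_lt_sub_one_of_pos (by positivity) hne
      rw [Real.log_div (by positivity) (by positivity)] at h3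
      have h4 : (x + 1 + 1) / (x + 1) - 1 = 1 / (x + 1) := by field_simp; ring
      linarith
    linarith
end

section
/- For all x > 0 and every positive integer k, (k-1)!/x^k + k!/(2x^{k+1}) < |ψ^(k)(x)| < (k-1)!/x^k + k!/x^{k+1}. -/
open Real MeasureTheory Filter Set

namespace PG13

open scoped Topology

/-- The auxiliary series `S j x = ∑ 1/(x+n)^(j+1)`. -/
noncomputable def S (j : ℕ) (x : ℝ) : ℝ := ∑' n : ℕ, ((x + n) ^ (j + 1))⁻¹

lemma summable_aux {c : ℝ} (hc : 0 < c) {p : ℕ} (hp : 2 ≤ p) :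
    Summable (fun n : ℕ => ((c + n) ^ p)⁻¹) := by
  rw [← summable_nat_add_iff 1]
  have h2 : Summable (fun n : ℕ => (((n : ℝ) + 1) ^ p)⁻¹) := by
    have h := (Real.summable_one_div_nat_pow (p := p)).mpr hp
    rw [← summable_nat_add_iff 1] at h
    apply h.congr
    intro n
    push_cast
    rw [one_div]
  refine h2.of_nonneg_of_le (fun n => by positivity) (fun n => ?_)
  have h1 : ((n : ℝ) + 1) ^ p ≤ (c + ((n + 1 : ℕ) : ℝ)) ^ p := by
    apply pow_le_pow_left₀ (by positivity)
    push_cast; linarith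
  exact inv_anti₀ (by positivity) h1

/-- derivative of a series of functions, via uniform convergence on an open set -/
lemma hasDerivAt_tsum' {s : Set ℝ} (hs : IsOpen s) (F F' : ℕ → ℝ → ℝ) (u : ℕ → ℝ)
    (hu : Summable u)
    (hF : ∀ n, ∀ y ∈ s, HasDerivAt (F n) (F' n y) y)
    (hb : ∀ n, ∀ y ∈ s, |F' n y| ≤ u n)
    (hsum : ∀ y ∈ s, Summable (fun n => F n y))
    {x : ℝ} (hx : x ∈ s) :
    HasDerivAt (fun y => ∑' n, F n y) (∑' n, F' n x) x := by
  refine hasDerivAt_of_tendstoUniformlyOn (g := fun y => ∑' n, F n y)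
    (g' := fun y => ∑' n, F' n y) (f := fun N y => ∑ n ∈ Finset.range N, F n y)
    (f' := fun N y => ∑ n ∈ Finset.range N, F' n y) (l := atTop) hs ?_ ?_ ?_ ?_
  · exact tendstoUniformlyOn_tsum_nat hu (fun n y hy => by
      simpa [Real.norm_eq_abs] using hb n y hy)
  · exact Filter.Eventually.of_forall (fun N y hy => HasDerivAt.fun_sum (fun n _ => hF n y hy))
  · exact fun y hy => ((hsum y hy).hasSum.tendsto_sum_nat)
  · exact hx


/-- The series form of the digamma function. -/
noncomputable def g (x : ℝ) : ℝ :=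
  -Real.eulerMascheroniConstant - x⁻¹ + ∑' n : ℕ, (((n : ℝ) + 1)⁻¹ - (x + n + 1)⁻¹)

lemma term_nonneg {x : ℝ} (hx : 0 < x) (n : ℕ) :
    0 ≤ ((n : ℝ) + 1)⁻¹ - (x + n + 1)⁻¹ := by
  have h1 : (0:ℝ) < (n:ℝ) + 1 := by positivity
  have := inv_anti₀ h1 (by linarith : (n:ℝ) + 1 ≤ x + n + 1)
  linarith

lemma term_le {x : ℝ} (hx : 0 < x) (n : ℕ) :
    ((n : ℝ) + 1)⁻¹ - (x + n + 1)⁻¹ ≤ x * (((n:ℝ) + 1) ^ 2)⁻¹ := by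
  have h1 : (0:ℝ) < (n:ℝ) + 1 := by positivity
  have h2 : (0:ℝ) < x + n + 1 := by positivity
  rw [show ((n : ℝ) + 1)⁻¹ - (x + n + 1)⁻¹ = x * (((n:ℝ)+1) * (x + n + 1))⁻¹ by
    field_simp; ring]
  apply mul_le_mul_of_nonneg_left _ hx.le
  apply inv_anti₀ (by positivity)
  rw [sq]
  apply mul_le_mul_of_nonneg_left (by linarith) h1.le

lemma summable_g {x : ℝ} (hx : 0 < x) :
    Summable (fun n : ℕ => ((n : ℝ) + 1)⁻¹ - (x + n + 1)⁻¹) := by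
  have h2 : Summable (fun n : ℕ => x * ((((n:ℝ) + 1)) ^ 2)⁻¹) := by
    apply Summable.mul_left
    have := summable_aux (c := (1:ℝ)) one_pos (le_refl 2)
    apply this.congr
    intro n
    congr 1
    ring
  exact h2.of_nonneg_of_le (term_nonneg hx) (term_le hx)

lemma hasDerivAt_logGamma {x : ℝ} (hx : 0 < x) :
    HasDerivAt (fun y => Real.log (Real.Gamma y)) (g x) x := by
  set s : Set ℝ := Ioo (x/2) (x+1) with hs_def
  have hs : IsOpen s := isOpen_Ioo
  have hxs : x ∈ s := ⟨by linarith, by linarith⟩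
  have hspos : ∀ y ∈ s, 0 < y := fun y hy => lt_trans (by linarith) hy.1
  set F' : ℕ → ℝ → ℝ := fun N y => Real.log N - ∑ m ∈ Finset.range (N+1), (y + m)⁻¹ with hF'
  refine hasDerivAt_of_tendstoUniformlyOn (g := fun y => Real.log (Real.Gamma y))
    (g' := g) (f := fun N y => Real.BohrMollerup.logGammaSeq y N) (f' := F')
    (l := atTop) hs ?_ ?_ ?_ hxs
  · -- uniform convergence of derivatives
    rw [Metric.tendstoUniformlyOn_iff]
    intro ε hε
    set u : ℕ → ℝ := fun n => (((n:ℝ) + 1) ^ 2)⁻¹ with hu_def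
    have hu : Summable u := by
      have := summable_aux (c := (1:ℝ)) one_pos (le_refl 2)
      apply this.congr; intro n; congr 1; ring
    set B : ℕ → ℝ := fun N =>
      |Real.log N - (harmonic N : ℝ) + Real.eulerMascheroniConstant| +
        (x + 1) * ∑' n : ℕ, u (n + N) with hB_def
    have hB : Tendsto B atTop (𝓝 0) := by
      have h1 : Tendsto (fun N : ℕ => Real.log N - (harmonic N : ℝ) +
          Real.eulerMascheroniConstant) atTop (𝓝 0) := by
        have := Real.tendsto_harmonic_sub_log
        have h2 := (this.neg).add_const Real.eulerMascheroniConstant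
        simp only [neg_sub] at h2
        simpa using h2
      have h1' := h1.abs
      rw [abs_zero] at h1'
      have h3 : Tendsto (fun N : ℕ => (x+1) * ∑' n : ℕ, u (n + N)) atTop (𝓝 0) := by
        have := tendsto_sum_nat_add u
        simpa using this.const_mul (x+1)
      simpa using h1'.add h3
    have hkey : ∀ y ∈ s, ∀ N : ℕ, F' N y - g y =
        (Real.log N - (harmonic N : ℝ) + Real.eulerMascheroniConstant) -
          ∑' n : ℕ, ((((n + N : ℕ) : ℝ) + 1)⁻¹ - (y + ((n + N : ℕ) : ℝ) + 1)⁻¹) := by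
      intro y hy N
      have hy0 := hspos y hy
      have hsplit := Finset.sum_range_succ' (fun m : ℕ => (y + (m:ℝ))⁻¹) N
      have htsum := (Summable.sum_add_tsum_nat_add N (summable_g hy0)).symm
      have hharm : (harmonic N : ℝ) = ∑ m ∈ Finset.range N, ((m:ℝ) + 1)⁻¹ := by
        rw [harmonic]
        push_cast
        rfl
      simp only [hF', g]
      rw [hsplit, htsum, Finset.sum_sub_distrib, hharm,
        show ∑ m ∈ Finset.range N, (y + ((m+1:ℕ):ℝ))⁻¹
            = ∑ m ∈ Finset.range N, (y + (m:ℝ) + 1)⁻¹ from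
          Finset.sum_congr rfl (fun m _ => by push_cast; ring_nf)]
      simp only [Nat.cast_zero, add_zero]
      ring
    have hev : ∀ᶠ N in atTop, B N < ε := hB.eventually_lt_const hε
    filter_upwards [hev] with N hN y hy
    have hy0 := hspos y hy
    rw [Real.dist_eq, abs_sub_comm, hkey y hy N]
    have hT0 : 0 ≤ ∑' n : ℕ, ((((n + N : ℕ) : ℝ) + 1)⁻¹ - (y + ((n + N : ℕ) : ℝ) + 1)⁻¹) :=
      tsum_nonneg (fun n => term_nonneg hy0 (n + N))
    have hTle : (∑' n : ℕ, ((((n + N : ℕ) : ℝ) + 1)⁻¹ - (y + ((n + N : ℕ) : ℝ) + 1)⁻¹)) ≤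
        (x + 1) * ∑' n : ℕ, u (n + N) := by
      rw [← tsum_mul_left]
      apply Summable.tsum_le_tsum
      · intro n
        refine (term_le hy0 (n + N)).trans ?_
        apply mul_le_mul_of_nonneg_right (by linarith [hy.2]) (by positivity)
      · exact (summable_nat_add_iff N).2 (summable_g hy0)
      · exact ((summable_nat_add_iff N).2 hu).mul_left _
    have habs := abs_sub (Real.log N - (harmonic N : ℝ) + Real.eulerMascheroniConstant)
      (∑' n : ℕ, ((((n + N : ℕ) : ℝ) + 1)⁻¹ - (y + ((n + N : ℕ) : ℝ) + 1)⁻¹))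
    rw [abs_of_nonneg hT0] at habs
    have : B N < ε := hN
    simp only [hB_def] at this
    linarith
  · -- derivatives of logGammaSeq
    refine Filter.Eventually.of_forall (fun N y hy => ?_)
    have hy0 : 0 < y := hspos y hy
    have hder : HasDerivAt (fun y => Real.BohrMollerup.logGammaSeq y N)
        (Real.log N - ∑ m ∈ Finset.range (N+1), ((y + m)⁻¹ * 1)) y := by
      unfold Real.BohrMollerup.logGammaSeq
      apply HasDerivAt.sub
      · exact (hasDerivAt_mul_const (Real.log N)).add_const _ |>.congr_deriv (by ring)
      · apply HasDerivAt.fun_sum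
        intro m _
        have hne : y + (m:ℝ) ≠ 0 := by positivity
        exact (Real.hasDerivAt_log hne).comp y ((hasDerivAt_id y).add_const (m:ℝ))
    simpa using hder
  · -- pointwise convergence
    exact fun y hy => Real.BohrMollerup.tendsto_log_gamma (hspos y hy)


lemma mem_Ioo_pos {x y : ℝ} (hx : 0 < x) (hy : y ∈ Ioo (x/2) (x+1)) : 0 < y :=
  lt_trans (by linarith) hy.1

lemma hasDerivAt_g {x : ℝ} (hx : 0 < x) : HasDerivAt g (S 1 x) x := by
  have h0 : HasDerivAt (fun y : ℝ => ∑' n : ℕ, (((n:ℝ) + 1)⁻¹ - (y + n + 1)⁻¹))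
      (∑' n : ℕ, ((x + n + 1) ^ 2)⁻¹) x := by
    refine hasDerivAt_tsum' (isOpen_Ioo (a := x/2) (b := x+1))
      (fun n y => ((n:ℝ) + 1)⁻¹ - (y + n + 1)⁻¹) (fun n y => ((y + n + 1) ^ 2)⁻¹)
      (fun n => ((x/2 + n + 1) ^ 2)⁻¹) ?_ ?_ ?_ ?_ (x := x) ⟨by linarith, by linarith⟩
    · have := summable_aux (c := x/2 + 1) (by linarith) (le_refl 2)
      apply this.congr
      intro n
      congr 2
      ring
    · intro n y hy
      have hy0 := mem_Ioo_pos hx hy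
      have hne : y + (n:ℝ) + 1 ≠ 0 := by positivity
      have hd : HasDerivAt (fun y : ℝ => (y + (n:ℝ) + 1)⁻¹) (-1 / (y + n + 1) ^ 2) y := by
        have h1 : HasDerivAt (fun y : ℝ => y + (n:ℝ) + 1) 1 y :=
          ((hasDerivAt_id y).add_const _).add_const _
        exact h1.inv hne
      have := hd.const_sub (((n:ℝ) + 1)⁻¹)
      refine this.congr_deriv ?_
      field_simp
    · intro n y hy
      have hy0 := mem_Ioo_pos hx hy
      rw [abs_of_nonneg (by positivity)]
      apply inv_anti₀ (by positivity)
      apply pow_le_pow_left₀ (by positivity)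
      linarith [hy.1]
    · intro y hy
      exact summable_g (mem_Ioo_pos hx hy)
  have h1 : HasDerivAt (fun y : ℝ => -Real.eulerMascheroniConstant - y⁻¹) ((x ^ 2)⁻¹) x := by
    have := ((hasDerivAt_id x).inv hx.ne').const_sub (-Real.eulerMascheroniConstant)
    refine this.congr_deriv ?_
    field_simp
    simp [hx.ne']
  have h2 := h1.add h0
  have e : S 1 x = (x ^ 2)⁻¹ + ∑' n : ℕ, ((x + n + 1) ^ 2)⁻¹ := by
    rw [S, Summable.tsum_eq_zero_add (summable_aux hx (le_refl 2))]
    congr 1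
    · norm_num
    · exact tsum_congr fun n => by push_cast; ring_nf
  rw [e]
  exact h2

lemma hasDerivAt_S {j : ℕ} (hj : 1 ≤ j) {x : ℝ} (hx : 0 < x) :
    HasDerivAt (S j) (-(j + 1 : ℝ) * S (j + 1) x) x := by
  have key : HasDerivAt (fun y : ℝ => ∑' n : ℕ, ((y + n) ^ (j + 1))⁻¹)
      (∑' n : ℕ, (-(j + 1 : ℝ) * ((x + n) ^ (j + 2))⁻¹)) x := by
    refine hasDerivAt_tsum' (isOpen_Ioo (a := x/2) (b := x+1))
      (fun n y => ((y + n) ^ (j + 1))⁻¹) (fun n y => -(j + 1 : ℝ) * ((y + n) ^ (j + 2))⁻¹)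
      (fun n => (j + 1 : ℝ) * ((x/2) ^ j)⁻¹ * ((x/2 + n) ^ 2)⁻¹) ?_ ?_ ?_ ?_
      (x := x) ⟨by linarith, by linarith⟩
    · exact ((summable_aux (show (0:ℝ) < x/2 by linarith) (le_refl 2)).mul_left _)
    · intro n y hy
      have hy0 := mem_Ioo_pos hx hy
      have hyn : (0:ℝ) < y + n := by positivity
      have hd := (hasDerivAt_zpow (-(j:ℤ) - 1) (y + n) (Or.inl hyn.ne')).comp y
        ((hasDerivAt_id y).add_const (n:ℝ))
      have e2 : (y + (n:ℝ)) ^ (-(j:ℤ) - 1 - 1) = ((y + n) ^ (j + 2))⁻¹ := by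
        rw [show -(j:ℤ) - 1 - 1 = -((j:ℤ) + 2) by ring, zpow_neg]
        norm_cast
      have hpos : ∀ᶠ z in 𝓝 y, (0:ℝ) < z + n := by
        filter_upwards [eventually_gt_nhds (show -(n:ℝ) < y by linarith)] with z hz
        linarith
      have feq : (fun z : ℝ => ((z + n) ^ (j + 1))⁻¹) =ᶠ[𝓝 y]
          ((fun z : ℝ => z ^ (-(j:ℤ) - 1)) ∘ fun z : ℝ => z + n) := by
        filter_upwards [hpos] with z hz
        simp only [Function.comp_apply]
        rw [show -(j:ℤ) - 1 = -((j:ℤ) + 1) by ring, zpow_neg]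
        norm_cast
      have hd2 := hd.congr_of_eventuallyEq feq
      refine hd2.congr_deriv ?_
      rw [mul_one, e2]
      push_cast
      ring
    · intro n y hy
      have hy0 := mem_Ioo_pos hx hy
      have h2 : (0:ℝ) < x/2 := by linarith
      show |(-(j + 1 : ℝ) * ((y + n) ^ (j + 2))⁻¹)| ≤
        (j + 1 : ℝ) * ((x/2) ^ j)⁻¹ * ((x/2 + n) ^ 2)⁻¹
      rw [abs_mul, abs_neg, abs_of_nonneg (by positivity : (0:ℝ) ≤ (j:ℝ) + 1),
        abs_of_nonneg (by positivity), mul_assoc]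
      apply mul_le_mul_of_nonneg_left _ (by positivity)
      rw [← mul_inv]
      apply inv_anti₀ (by positivity)
      calc (x/2) ^ j * (x/2 + n) ^ 2
          ≤ (x/2 + n) ^ j * (x/2 + n) ^ 2 :=
            mul_le_mul_of_nonneg_right (pow_le_pow_left₀ (by positivity) (by linarith) j)
              (by positivity)
        _ = (x/2 + n) ^ (j + 2) := by rw [← pow_add]
        _ ≤ (y + n) ^ (j + 2) := pow_le_pow_left₀ (by positivity) (by linarith [hy.1]) _
    · intro y hy
      exact summable_aux (mem_Ioo_pos hx hy) (by omega)
  have e : ∑' n : ℕ, (-(j + 1 : ℝ) * ((x + n) ^ (j + 2))⁻¹) = -(j + 1 : ℝ) * S (j + 1) x := by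
    rw [tsum_mul_left, S]
  rw [← e]
  exact key


lemma digamma_eq_g {x : ℝ} (hx : 0 < x) : digamma x = g x :=
  (hasDerivAt_logGamma hx).deriv

lemma polygamma_eq : ∀ {k : ℕ}, 1 ≤ k → ∀ {x : ℝ}, 0 < x →
    iteratedDeriv k digamma x = (-1) ^ (k + 1) * (k.factorial : ℝ) * S k x := by
  intro k
  induction k with
  | zero => omega
  | succ k ih =>
    intro _ x hx
    rcases Nat.eq_zero_or_pos k with hk0 | hk1
    · subst hk0
      rw [iteratedDeriv_one]
      have hev : digamma =ᶠ[𝓝 x] g :=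
        Filter.eventuallyEq_of_mem (Ioi_mem_nhds hx) (fun y hy => digamma_eq_g hy)
      rw [hev.deriv_eq, (hasDerivAt_g hx).deriv]
      norm_num
    · rw [iteratedDeriv_succ]
      have hev : iteratedDeriv k digamma =ᶠ[𝓝 x]
          (fun y => (-1) ^ (k + 1) * (k.factorial : ℝ) * S k y) :=
        Filter.eventuallyEq_of_mem (Ioi_mem_nhds hx) (fun y hy => ih hk1 hy)
      rw [hev.deriv_eq]
      have hd : HasDerivAt (fun y => (-1 : ℝ) ^ (k + 1) * (k.factorial : ℝ) * S k y)
          ((-1 : ℝ) ^ (k + 1) * (k.factorial : ℝ) * (-(k + 1 : ℝ) * S (k + 1) x)) x :=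
        (hasDerivAt_S hk1 hx).const_mul _
      rw [hd.deriv]
      rw [pow_succ (-1 : ℝ) (k + 1), Nat.factorial_succ]
      push_cast
      ring

lemma geom_aux {a : ℝ} (ha : 0 < a) (k : ℕ) :
    (a + 1) ^ k - a ^ k = ∑ i ∈ Finset.range k, (a + 1) ^ i * a ^ (k - 1 - i) := by
  have h := geom_sum₂_mul (a + 1) a k
  have : (a + 1) - a = 1 := by ring
  rw [this, mul_one] at h
  exact h.symm

lemma key_upper {a : ℝ} (ha : 0 < a) {k : ℕ} (hk : 1 ≤ k) :
    ((a + 1) ^ (k + 1))⁻¹ < ((a ^ k)⁻¹ - ((a + 1) ^ k)⁻¹) / k := by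
  set b := a + 1 with hb_def
  have hb : 0 < b := by simp [hb_def]; linarith
  have hab : a < b := by simp [hb_def]
  have hsum : (k : ℝ) * a ^ k < b * (b ^ k - a ^ k) := by
    rw [geom_aux ha k, Finset.mul_sum]
    rw [show (k : ℝ) * a ^ k = ∑ _i ∈ Finset.range k, a ^ k by
      rw [Finset.sum_const, Finset.card_range, nsmul_eq_mul]]
    apply Finset.sum_lt_sum_of_nonempty (Finset.nonempty_range_iff.mpr (by omega))
    intro i hi
    have hik : i < k := Finset.mem_range.mp hi
    have h1 : a ^ (i + 1) < b ^ (i + 1) := by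
      apply pow_lt_pow_left₀ hab ha.le
      omega
    calc a ^ k = a ^ (i + 1) * a ^ (k - 1 - i) := by
          rw [← pow_add]; congr 1; omega
      _ < b ^ (i + 1) * a ^ (k - 1 - i) :=
          mul_lt_mul_of_pos_right h1 (pow_pos ha _)
      _ = b * (b ^ i * a ^ (k - 1 - i)) := by ring
  have hak : (0:ℝ) < a ^ k := pow_pos ha k
  have hbk : (0:ℝ) < b ^ k := pow_pos hb k
  have hkpos : (0:ℝ) < (k : ℝ) := by exact_mod_cast hk
  have e : (a ^ k)⁻¹ - (b ^ k)⁻¹ = (b ^ k - a ^ k) / (a ^ k * b ^ k) := by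
    field_simp
  rw [e, div_div, inv_eq_one_div, div_lt_div_iff₀ (by positivity) (by positivity)]
  have e2 : (b : ℝ) ^ (k + 1) = b ^ k * b := pow_succ b k
  have h3 := mul_lt_mul_of_pos_right hsum hbk
  nlinarith [h3, e2]

lemma key_lower {a : ℝ} (ha : 0 < a) {k : ℕ} (hk : 1 ≤ k) :
    ((a ^ k)⁻¹ - ((a + 1) ^ k)⁻¹) / k < ((a ^ (k + 1))⁻¹ + ((a + 1) ^ (k + 1))⁻¹) / 2 := by
  set b := a + 1 with hb_def
  have hb : 0 < b := by simp [hb_def]; linarith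
  have hab : a < b := by simp [hb_def]
  have hsum : 2 * a * b * (b ^ k - a ^ k) < (k : ℝ) * (a ^ (k + 1) + b ^ (k + 1)) := by
    rw [geom_aux ha k, Finset.mul_sum]
    have t1 : ∀ i ∈ Finset.range k, 2 * a * b * (b ^ i * a ^ (k - 1 - i)) =
        a ^ (k - i) * b ^ (i + 1) + a ^ (k - i) * b ^ (i + 1) := by
      intro i hi
      have hik : i < k := Finset.mem_range.mp hi
      have e1 : a * a ^ (k - 1 - i) = a ^ (k - i) := by
        rw [← pow_succ']; congr 1; omega
      have e2 : b * b ^ i = b ^ (i + 1) := by rw [← pow_succ']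
      calc 2 * a * b * (b ^ i * a ^ (k - 1 - i))
          = (a * a ^ (k - 1 - i)) * (b * b ^ i) + (a * a ^ (k - 1 - i)) * (b * b ^ i) := by ring
        _ = a ^ (k - i) * b ^ (i + 1) + a ^ (k - i) * b ^ (i + 1) := by rw [e1, e2]
    rw [Finset.sum_congr rfl t1, Finset.sum_add_distrib]
    have refl : ∑ i ∈ Finset.range k, a ^ (k - i) * b ^ (i + 1) =
        ∑ i ∈ Finset.range k, a ^ (i + 1) * b ^ (k - i) := by
      rw [← Finset.sum_range_reflect]
      apply Finset.sum_congr rfl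
      intro j hj
      have hjk : j < k := Finset.mem_range.mp hj
      congr 2 <;> omega
    rw [show ∀ A B : ℝ, A + B = A + B from fun _ _ => rfl]
    nth_rewrite 2 [refl]
    rw [show (k : ℝ) * (a ^ (k + 1) + b ^ (k + 1)) =
        ∑ _i ∈ Finset.range k, (a ^ (k + 1) + b ^ (k + 1)) by
      rw [Finset.sum_const, Finset.card_range, nsmul_eq_mul]]
    rw [← Finset.sum_add_distrib]
    apply Finset.sum_lt_sum_of_nonempty (Finset.nonempty_range_iff.mpr (by omega))
    intro i hi
    have hik : i < k := Finset.mem_range.mp hi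
    have p1 : a ^ (k - i) < b ^ (k - i) := pow_lt_pow_left₀ hab ha.le (by omega)
    have p2 : a ^ (i + 1) < b ^ (i + 1) := pow_lt_pow_left₀ hab ha.le (by omega)
    have hm := mul_pos (sub_pos.2 p1) (sub_pos.2 p2)
    have e1 : b ^ (k - i) * b ^ (i + 1) = b ^ (k + 1) := by
      rw [← pow_add]; congr 1; omega
    have e2 : a ^ (k - i) * a ^ (i + 1) = a ^ (k + 1) := by
      rw [← pow_add]; congr 1; omega
    nlinarith [hm, e1, e2]
  have hak : (0:ℝ) < a ^ k := pow_pos ha k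
  have hbk : (0:ℝ) < b ^ k := pow_pos hb k
  have hak1 : (0:ℝ) < a ^ (k + 1) := pow_pos ha _
  have hbk1 : (0:ℝ) < b ^ (k + 1) := pow_pos hb _
  have hkpos : (0:ℝ) < (k : ℝ) := by exact_mod_cast hk
  have e : (a ^ k)⁻¹ - (b ^ k)⁻¹ = (b ^ k - a ^ k) / (a ^ k * b ^ k) := by field_simp
  have e' : (a ^ (k + 1))⁻¹ + (b ^ (k + 1))⁻¹ =
      (b ^ (k + 1) + a ^ (k + 1)) / (a ^ (k + 1) * b ^ (k + 1)) := by
    field_simp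
  rw [e, e', div_div, div_div, div_lt_div_iff₀ (by positivity) (by positivity)]
  have f1 : a ^ (k + 1) = a ^ k * a := pow_succ a k
  have f2 : b ^ (k + 1) = b ^ k * b := pow_succ b k
  rw [f1, f2] at hsum ⊢
  nlinarith [mul_lt_mul_of_pos_right hsum (by positivity : (0:ℝ) < a ^ k * b ^ k)]

lemma S_bounds {x : ℝ} (hx : 0 < x) {k : ℕ} (hk : 1 ≤ k) :
    (x ^ k)⁻¹ / k + (x ^ (k + 1))⁻¹ / 2 < S k x ∧
      S k x < (x ^ k)⁻¹ / k + (x ^ (k + 1))⁻¹ := by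
  have hxn : ∀ n : ℕ, (0:ℝ) < x + n := fun n => by positivity
  set f : ℕ → ℝ := fun n => ((x + n) ^ (k + 1))⁻¹ with hf_def
  set G : ℕ → ℝ := fun n => ((x + n) ^ k)⁻¹ / k with hG_def
  have hS : S k x = ∑' n, f n := rfl
  have hfs : Summable f := summable_aux hx (by omega)
  have hfpos : ∀ n, 0 < f n := fun n => by
    simp only [hf_def]
    positivity
  have hcast : ∀ n : ℕ, x + ((n + 1 : ℕ) : ℝ) = (x + n) + 1 := fun n => by push_cast; ring
  have up : ∀ n : ℕ, f (n + 1) < G n - G (n + 1) := by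
    intro n
    have h := key_upper (hxn n) hk
    simp only [hf_def, hG_def, hcast n]
    rw [sub_div] at h
    exact h
  have low : ∀ n : ℕ, G n - G (n + 1) < (f n + f (n + 1)) / 2 := by
    intro n
    have h := key_lower (hxn n) hk
    simp only [hf_def, hG_def, hcast n]
    rw [sub_div] at h
    exact h
  have hGpos : ∀ n, 0 ≤ G n := fun n => by
    simp only [hG_def]
    positivity
  have hGlim : Tendsto G atTop (𝓝 0) := by
    have h1 : Tendsto (fun n : ℕ => x + (n : ℝ)) atTop atTop :=
      tendsto_atTop_add_const_left _ x tendsto_natCast_atTop_atTop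
    have h2 : Tendsto (fun n : ℕ => (x + (n : ℝ)) ^ k) atTop atTop :=
      (tendsto_pow_atTop (by omega)).comp h1
    have h3 := h2.inv_tendsto_atTop
    have h4 := h3.div_const (k : ℝ)
    simpa [hG_def] using h4
  have htel : ∀ N, ∑ i ∈ Finset.range N, (G i - G (i + 1)) = G 0 - G N :=
    fun N => Finset.sum_range_sub' G N
  have hGsummable : Summable (fun n => G n - G (n + 1)) := by
    apply summable_of_sum_range_le (c := G 0)
      (fun n => le_of_lt (lt_trans (hfpos (n + 1)) (up n)))
    intro n
    rw [htel n]
    linarith [hGpos n]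
  have hGsum : HasSum (fun n => G n - G (n + 1)) (G 0) := by
    rw [hGsummable.hasSum_iff_tendsto_nat]
    have : (fun N => ∑ i ∈ Finset.range N, (G i - G (i + 1))) = fun N => G 0 - G N :=
      funext htel
    rw [this]
    simpa using tendsto_const_nhds.sub hGlim
  have hfs1 : Summable (fun n => f (n + 1)) := (summable_nat_add_iff 1).2 hfs
  have hG0 : G 0 = (x ^ k)⁻¹ / k := by simp [hG_def]
  have hf0 : f 0 = (x ^ (k + 1))⁻¹ := by simp [hf_def]
  constructor
  · -- lower bound
    have h1 : G 0 < ∑' n, (f n + f (n + 1)) / 2 := by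
      have h := Summable.tsum_lt_tsum (f := fun n => G n - G (n + 1))
        (g := fun n => (f n + f (n + 1)) / 2) (fun n => (low n).le) (low 0)
        hGsummable ((hfs.add hfs1).div_const 2)
      rwa [hGsum.tsum_eq] at h
    have h2 : ∑' n, (f n + f (n + 1)) / 2 = ∑' n, f n - f 0 / 2 := by
      rw [tsum_div_const, Summable.tsum_add hfs hfs1]
      have h3 := Summable.tsum_eq_zero_add hfs
      rw [show ∑' n, f (n + 1) = ∑' n, f n - f 0 by rw [h3]; ring]
      ring
    rw [hS]
    rw [hG0, hf0] at *
    linarith [h1, h2]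
  · -- upper bound
    have h1 : ∑' n, f (n + 1) < G 0 := by
      have h := Summable.tsum_lt_tsum (f := fun n => f (n + 1))
        (g := fun n => G n - G (n + 1)) (fun n => (up n).le) (up 0)
        hfs1 hGsummable
      rwa [hGsum.tsum_eq] at h
    rw [hS, Summable.tsum_eq_zero_add hfs, hG0, hf0] at *
    linarith [h1]

end PG13

theorem stmt13 (x : ℝ) (hx : 0 < x) (k : ℕ) (hk : 1 ≤ k) :
    (Nat.factorial (k - 1) : ℝ) / x ^ k + (Nat.factorial k : ℝ) / (2 * x ^ (k + 1)) <
        |polygamma k x| ∧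
      |polygamma k x| <
        (Nat.factorial (k - 1) : ℝ) / x ^ k + (Nat.factorial k : ℝ) / x ^ (k + 1) := by
  have hfe := PG13.polygamma_eq hk hx
  have hS := PG13.S_bounds hx hk
  have hk0 : (0:ℝ) < (k:ℝ) := by exact_mod_cast hk
  have hkne : (k:ℝ) ≠ 0 := hk0.ne'
  have hx0 : x ≠ 0 := hx.ne'
  have hSpos : 0 < PG13.S k x := by
    have h1 : (0:ℝ) < (x ^ k)⁻¹ / k + (x ^ (k + 1))⁻¹ / 2 :=
      add_pos (div_pos (by positivity) hk0) (by positivity)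
    linarith [hS.1]
  have hpoly : polygamma k x = (-1) ^ (k + 1) * (k.factorial : ℝ) * PG13.S k x := hfe
  have habs : |polygamma k x| = (k.factorial : ℝ) * PG13.S k x := by
    rw [hpoly, abs_mul, abs_mul, abs_pow, abs_neg, abs_one, one_pow, one_mul,
      abs_of_pos hSpos, Nat.abs_cast]
  have hfactnat : (k - 1).factorial * k = k.factorial := by
    rw [mul_comm]; exact Nat.mul_factorial_pred (by omega)
  have hfact : (k.factorial : ℝ) = ((k - 1).factorial : ℝ) * k := by
    exact_mod_cast (congrArg (Nat.cast (R := ℝ)) hfactnat).symm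
  have hfactpos : (0:ℝ) < (k.factorial : ℝ) := by exact_mod_cast k.factorial_pos
  constructor
  · rw [habs]
    have h1 := mul_lt_mul_of_pos_left hS.1 hfactpos
    have e : (k.factorial : ℝ) * ((x ^ k)⁻¹ / k + (x ^ (k + 1))⁻¹ / 2) =
        ((k - 1).factorial : ℝ) / x ^ k + (k.factorial : ℝ) / (2 * x ^ (k + 1)) := by
      rw [hfact]
      field_simp
    linarith [h1, e.symm.le, e.le]
  · rw [habs]
    have h1 := mul_lt_mul_of_pos_left hS.2 hfactpos
    have e : (k.factorial : ℝ) * ((x ^ k)⁻¹ / k + (x ^ (k + 1))⁻¹) =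
        ((k - 1).factorial : ℝ) / x ^ k + (k.factorial : ℝ) / x ^ (k + 1) := by
      rw [hfact]
      field_simp
    linarith [h1, e.le, e.symm.le]
end
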